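/- arXiv:2509.21105 — 2 statements merged into one kernel-verified Lean document; each statement's English description precedes it below -/
import Mathlib

section
/- Let n ≥ 2, d > 0, D > 0 with D ≥ (n−1)d. Among all sequences 0 = y₁ < y₂ < ⋯ < y_n = D with yᵢ₊₁ − yᵢ ≥ d for all i, the total sum of squares Σᵢ(yᵢ − ȳ)² is maximized by a configuration in which all but one of the consecutive gaps equal d and the remaining gap equals D − (n−2)d. -/
open Finset

/-- `tssF n y` is the total sum of squares of `y 0, ..., y (n-1)`. -/
noncomputable def tssF (n : ℕ) (y : ℕ → ℝ) : ℝ :=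
  ∑ i ∈ Finset.range n, (y i - (∑ j ∈ Finset.range n, y j) / n) ^ 2

/-- vertex configuration: arithmetic progression with one extra jump of `S` after index `j`. -/
noncomputable def vtx (d S : ℝ) (j k : ℕ) : ℝ := k * d + if j < k then S else 0

lemma jensen_sq (s : Finset ℕ) (w a : ℕ → ℝ) (hw : ∀ j ∈ s, 0 ≤ w j)
    (hw1 : ∑ j ∈ s, w j = 1) :
    (∑ j ∈ s, w j * a j) ^ 2 ≤ ∑ j ∈ s, w j * a j ^ 2 := by
  have h := Finset.sum_mul_sq_le_sq_mul_sq s (fun j => Real.sqrt (w j))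
      (fun j => Real.sqrt (w j) * a j)
  have e1 : ∀ j ∈ s, Real.sqrt (w j) * (Real.sqrt (w j) * a j) = w j * a j := by
    intro j hj; rw [← mul_assoc, Real.mul_self_sqrt (hw j hj)]
  have e2 : ∀ j ∈ s, Real.sqrt (w j) ^ 2 = w j := fun j hj => Real.sq_sqrt (hw j hj)
  have e3 : ∀ j ∈ s, (Real.sqrt (w j) * a j) ^ 2 = w j * a j ^ 2 := by
    intro j hj; rw [mul_pow, Real.sq_sqrt (hw j hj)]
  rw [Finset.sum_congr rfl e1, Finset.sum_congr rfl e2, Finset.sum_congr rfl e3, hw1, one_mul] at h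
  exact h

lemma tss_eq (n : ℕ) (hn : 0 < n) (y : ℕ → ℝ) :
    tssF n y = (∑ i ∈ range n, (y i) ^ 2) - (∑ i ∈ range n, y i) ^ 2 / n := by
  have hn' : (n : ℝ) ≠ 0 := Nat.cast_ne_zero.2 hn.ne'
  unfold tssF
  set T := ∑ j ∈ range n, y j with hT
  have h : ∀ i ∈ range n, (y i - T / n) ^ 2
      = y i ^ 2 - (2 * (T / n)) * y i + (T / n) ^ 2 := by
    intros; ring
  rw [Finset.sum_congr rfl h, Finset.sum_add_distrib, Finset.sum_sub_distrib,
    ← Finset.mul_sum, Finset.sum_const, card_range, nsmul_eq_mul, ← hT]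
  field_simp
  ring

lemma gauss_real (m : ℕ) : ∑ k ∈ range m, (k : ℝ) = m * (m - 1) / 2 := by
  induction m with
  | zero => simp
  | succ m ih =>
    rw [Finset.sum_range_succ, ih]
    push_cast
    ring

lemma filter_lt_range (n j : ℕ) : (range n).filter (fun k => j < k) = Ico (j + 1) n := by
  ext k
  simp only [mem_filter, mem_range, mem_Ico]
  omega

lemma sum_ite_range (n j : ℕ) (c : ℕ → ℝ) (hj : j + 1 ≤ n) :
    ∑ k ∈ range n, (if j < k then c k else 0)
      = ∑ k ∈ range n, c k - ∑ k ∈ range (j + 1), c k := by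
  rw [← Finset.sum_filter, filter_lt_range, Finset.sum_Ico_eq_sub _ hj]

lemma card_ite_range (n j : ℕ) (c : ℝ) (hj : j + 1 ≤ n) :
    ∑ k ∈ range n, (if j < k then c else 0) = ((n : ℝ) - (j + 1)) * c := by
  rw [sum_ite_range n j _ hj, Finset.sum_const, Finset.sum_const, card_range, card_range]
  ring

/-- closed form for the TSS of a vertex configuration. -/
lemma tss_vtx (n : ℕ) (hn : 2 ≤ n) (d S : ℝ) (j : ℕ) (hj : j + 1 < n) :
    tssF n (vtx d S j) =
      (∑ k ∈ range n, (k : ℝ) ^ 2) * d ^ 2 - ((n : ℝ) * ((n : ℝ) - 1) / 2) ^ 2 * d ^ 2 / n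
        + (S * d + S ^ 2 / n) * ((j : ℝ) + 1) * ((n : ℝ) - 1 - (j : ℝ)) := by
  have hn0 : 0 < n := by omega
  have hn' : (n : ℝ) ≠ 0 := Nat.cast_ne_zero.2 hn0.ne'
  have hj' : j + 1 ≤ n := by omega
  have hT : ∑ k ∈ range n, vtx d S j k
      = (n : ℝ) * ((n : ℝ) - 1) / 2 * d + ((n : ℝ) - (j + 1)) * S := by
    unfold vtx
    rw [Finset.sum_add_distrib, card_ite_range n j S hj', ← Finset.sum_mul, gauss_real]
  have hQ : ∑ k ∈ range n, (vtx d S j k) ^ 2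
      = (∑ k ∈ range n, (k : ℝ) ^ 2) * d ^ 2
        + 2 * d * S * ((n : ℝ) * ((n : ℝ) - 1) / 2 - (j + 1) * j / 2)
        + ((n : ℝ) - (j + 1)) * S ^ 2 := by
    unfold vtx
    have h : ∀ k ∈ range n, ((k : ℝ) * d + if j < k then S else 0) ^ 2
        = (k : ℝ) ^ 2 * d ^ 2 + (if j < k then 2 * d * S * k + S ^ 2 else 0) := by
      intro k _
      by_cases h : j < k
      · rw [if_pos h, if_pos h]; ring
      · rw [if_neg h, if_neg h]; ring
    rw [Finset.sum_congr rfl h, Finset.sum_add_distrib, ← Finset.sum_mul,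
      sum_ite_range n j _ hj']
    have h1 : ∑ k ∈ range n, (2 * d * S * (k : ℝ) + S ^ 2)
        = 2 * d * S * ((n : ℝ) * ((n : ℝ) - 1) / 2) + (n : ℝ) * S ^ 2 := by
      rw [Finset.sum_add_distrib, ← Finset.mul_sum, gauss_real, Finset.sum_const,
        card_range, nsmul_eq_mul]
    have h2 : ∑ k ∈ range (j + 1), (2 * d * S * (k : ℝ) + S ^ 2)
        = 2 * d * S * ((j + 1 : ℝ) * ((j + 1 : ℝ) - 1) / 2) + (j + 1 : ℝ) * S ^ 2 := by
      rw [Finset.sum_add_distrib, ← Finset.mul_sum, gauss_real, Finset.sum_const,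
        card_range, nsmul_eq_mul]
      push_cast
      ring
    rw [h1, h2]
    ring
  rw [tss_eq n hn0, hT, hQ]
  have hjn : (j : ℝ) + 1 ≤ (n : ℝ) - 1 := by
    have : (j : ℝ) + 2 ≤ (n : ℝ) := by exact_mod_cast hj
    linarith
  field_simp
  ring

lemma nat_key (n j : ℕ) (hn : 2 ≤ n) (hj : j + 1 < n) :
    (j + 1) * (n - 1 - j) ≤ ((n - 2) / 2 + 1) * (n - 1 - (n - 2) / 2) := by
  set a := (n - 2) / 2 with ha
  have h2 : 2 * a + 2 = n ∨ 2 * a + 3 = n := by omega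
  have hja : j ≤ n - 2 := by omega
  have han : a + 1 ≤ n - 1 := by omega
  zify [show j ≤ n - 1 by omega, show a ≤ n - 1 by omega, show (1:ℕ) ≤ n by omega]
  have hn' : (n : ℤ) = 2 * a + 2 ∨ (n : ℤ) = 2 * a + 3 := by omega
  rcases hn' with h | h <;> rw [h] <;> rcases le_or_gt (j : ℤ) (a : ℤ) with hc | hc <;>
    nlinarith [sq_nonneg ((j : ℤ) - a), sq_nonneg ((j : ℤ) - a - 1)]

lemma vtx_gap (d S : ℝ) (j i : ℕ) :
    vtx d S j (i + 1) - vtx d S j i = d + if i = j then S else 0 := by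
  unfold vtx
  push_cast
  rcases lt_trichotomy i j with h | h | h
  · rw [if_neg (by omega), if_neg (by omega), if_neg (by omega)]; ring
  · subst h; rw [if_pos (by omega), if_neg (by omega), if_pos rfl]; ring
  · rw [if_pos (by omega), if_pos (by omega), if_neg (by omega)]; ring

open Finset in
theorem tss_maximizer_gap_structure (n : ℕ) (hn : 2 ≤ n) (d D : ℝ) (hd : 0 < d)
    (hD : (n - 1 : ℝ) * d ≤ D) :
    let Feasible : (ℕ → ℝ) → Prop := fun y =>
      y 0 = 0 ∧ y (n - 1) = D ∧ ∀ i, i + 1 < n → d ≤ y (i + 1) - y i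
    let TSS : (ℕ → ℝ) → ℝ := fun y =>
      ∑ i ∈ Finset.range n, (y i - (∑ j ∈ Finset.range n, y j) / n) ^ 2
    ∃ ystar : ℕ → ℝ, Feasible ystar ∧
      (∃ j, j + 1 < n ∧
        (∀ i, i + 1 < n → i ≠ j → ystar (i + 1) - ystar i = d) ∧
        ystar (j + 1) - ystar j = D - (n - 2 : ℝ) * d) ∧
      ∀ y : ℕ → ℝ, Feasible y → TSS y ≤ TSS ystar := by
  intro Feasible TSS
  have hn0 : 0 < n := by omega
  have hn' : (n : ℝ) ≠ 0 := Nat.cast_ne_zero.2 hn0.ne'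
  set S : ℝ := D - ((n : ℝ) - 1) * d with hSdef
  have hS : 0 ≤ S := by simp only [hSdef]; linarith
  set j0 : ℕ := (n - 2) / 2 with hj0def
  have hj0n : j0 + 1 < n := by omega
  have hTSS : ∀ y, TSS y = tssF n y := fun y => rfl
  refine ⟨vtx d S j0, ⟨?_, ?_, ?_⟩, ⟨j0, hj0n, ?_, ?_⟩, ?_⟩
  · simp [vtx]
  · unfold vtx
    rw [if_pos (by omega)]
    have : ((n - 1 : ℕ) : ℝ) = (n : ℝ) - 1 := by
      push_cast [Nat.cast_sub (show 1 ≤ n by omega)]; ring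
    rw [this, hSdef]; ring
  · intro i _
    rw [vtx_gap]
    by_cases h : i = j0
    · rw [if_pos h]; linarith
    · rw [if_neg h]; linarith
  · intro i _ h
    rw [vtx_gap, if_neg h, add_zero]
  · rw [vtx_gap, if_pos rfl, hSdef]; ring
  · -- maximality
    rintro y ⟨hy0, hyD, hygap⟩
    rw [hTSS, hTSS]
    -- gap excesses
    set ε : ℕ → ℝ := fun j => y (j + 1) - y j - d with hε
    have hεpos : ∀ j ∈ range (n - 1), 0 ≤ ε j := by
      intro j hj
      simp only [mem_range] at hj
      have := hygap j (by omega)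
      simp only [hε]; linarith
    have htel : ∀ k, ∑ j ∈ range k, ε j = y k - (k : ℝ) * d := by
      intro k
      have h1 : ∑ j ∈ range k, (y (j + 1) - y j) = y k - y 0 := Finset.sum_range_sub y k
      calc ∑ j ∈ range k, ε j = ∑ j ∈ range k, ((y (j + 1) - y j) - d) := rfl
        _ = (y k - y 0) - (k : ℝ) * d := by
            rw [Finset.sum_sub_distrib, h1, Finset.sum_const, card_range, nsmul_eq_mul]
        _ = y k - (k : ℝ) * d := by rw [hy0]; ring
    have hεsum : ∑ j ∈ range (n - 1), ε j = S := by
      rw [htel (n - 1), hyD]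
      have : ((n - 1 : ℕ) : ℝ) = (n : ℝ) - 1 := by
        push_cast [Nat.cast_sub (show 1 ≤ n by omega)]; ring
      rw [this, hSdef]
    -- per-vertex comparison
    have hvle : ∀ j ∈ range (n - 1), tssF n (vtx d S j) ≤ tssF n (vtx d S j0) := by
      intro j hj
      simp only [mem_range] at hj
      have hjn : j + 1 < n := by omega
      rw [tss_vtx n hn d S j hjn, tss_vtx n hn d S j0 hj0n]
      have hcoef : 0 ≤ S * d + S ^ 2 / n := by
        have : (0:ℝ) ≤ (n:ℝ) := Nat.cast_nonneg n
        positivity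
      have hkey := nat_key n j hn hjn
      have hkeyR : ((j : ℝ) + 1) * ((n : ℝ) - 1 - (j : ℝ))
          ≤ ((j0 : ℝ) + 1) * ((n : ℝ) - 1 - (j0 : ℝ)) := by
        have c1 : ((j + 1) * (n - 1 - j) : ℕ) ≤ ((j0 + 1) * (n - 1 - j0) : ℕ) := hkey
        have e1 : (((j + 1) * (n - 1 - j) : ℕ) : ℝ) = ((j : ℝ) + 1) * ((n : ℝ) - 1 - (j : ℝ)) := by
          push_cast [Nat.cast_sub (show j ≤ n - 1 by omega), Nat.cast_sub (show 1 ≤ n by omega)]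
          ring
        have e2 : (((j0 + 1) * (n - 1 - j0) : ℕ) : ℝ)
            = ((j0 : ℝ) + 1) * ((n : ℝ) - 1 - (j0 : ℝ)) := by
          push_cast [Nat.cast_sub (show j0 ≤ n - 1 by omega), Nat.cast_sub (show 1 ≤ n by omega)]
          ring
        calc ((j : ℝ) + 1) * ((n : ℝ) - 1 - (j : ℝ)) = (((j + 1) * (n - 1 - j) : ℕ) : ℝ) := e1.symm
          _ ≤ (((j0 + 1) * (n - 1 - j0) : ℕ) : ℝ) := by exact_mod_cast c1
          _ = ((j0 : ℝ) + 1) * ((n : ℝ) - 1 - (j0 : ℝ)) := e2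
      nlinarith [mul_le_mul_of_nonneg_left hkeyR hcoef]
    rcases eq_or_lt_of_le hS with hS0 | hSpos
    · -- S = 0 : y is forced to equal the vertex configuration
      have hε0 : ∀ j ∈ range (n - 1), ε j = 0 := by
        have := (Finset.sum_eq_zero_iff_of_nonneg hεpos).1 (by rw [hεsum, ← hS0])
        exact this
      have hyk : ∀ k ∈ range n, y k = vtx d S j0 k := by
        intro k hk
        simp only [mem_range] at hk
        have : ∑ j ∈ range k, ε j = 0 := by
          apply Finset.sum_eq_zero
          intro j hj
          simp only [mem_range] at hj
          exact hε0 j (by simp only [mem_range]; omega)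
        have hyk' := htel k
        rw [this] at hyk'
        unfold vtx
        rw [← hS0]
        simp
        linarith
      have : tssF n y = tssF n (vtx d S j0) := by
        unfold tssF
        rw [Finset.sum_congr rfl fun j hj => hyk j hj]
        exact Finset.sum_congr rfl fun i hi => by rw [hyk i hi]
      linarith
    · -- S > 0 : convex decomposition
      set w : ℕ → ℝ := fun j => ε j / S with hw
      have hwpos : ∀ j ∈ range (n - 1), 0 ≤ w j := fun j hj =>
        div_nonneg (hεpos j hj) hS
      have hw1 : ∑ j ∈ range (n - 1), w j = 1 := by
        rw [hw]
        rw [← Finset.sum_div, hεsum, div_self hSpos.ne']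
      -- decomposition of y as convex combination of vertices
      have hdecomp : ∀ k ∈ range n, y k = ∑ j ∈ range (n - 1), w j * vtx d S j k := by
        intro k hk
        simp only [mem_range] at hk
        have hfil : ∑ j ∈ range (n - 1), w j * (if j < k then S else 0)
            = ∑ j ∈ range k, ε j := by
          have : ∀ j ∈ range (n - 1), w j * (if j < k then S else 0)
              = if j < k then ε j else 0 := by
            intro j hj
            by_cases h : j < k
            · rw [if_pos h, if_pos h, hw]
              field_simp
            · rw [if_neg h, if_neg h, mul_zero]
          rw [Finset.sum_congr rfl this, ← Finset.sum_filter]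
          apply Finset.sum_congr _ (fun _ _ => rfl)
          ext j
          simp only [mem_filter, mem_range]
          omega
        have : ∑ j ∈ range (n - 1), w j * vtx d S j k
            = (∑ j ∈ range (n - 1), w j) * ((k : ℝ) * d)
              + ∑ j ∈ range (n - 1), w j * (if j < k then S else 0) := by
          unfold vtx
          rw [Finset.sum_mul]
          rw [← Finset.sum_add_distrib]
          apply Finset.sum_congr rfl
          intro j _
          ring
        rw [this, hw1, one_mul, hfil, htel k]
        ring
      -- means
      have hmean : (∑ i ∈ range n, y i) / n
          = ∑ j ∈ range (n - 1), w j * ((∑ k ∈ range n, vtx d S j k) / n) := by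
        rw [Finset.sum_congr rfl hdecomp, Finset.sum_comm]
        rw [Finset.sum_div]
        apply Finset.sum_congr rfl
        intro j _
        rw [← Finset.mul_sum, mul_div_assoc]
      -- Jensen pointwise
      have hjensen : ∀ k ∈ range n,
          (y k - (∑ i ∈ range n, y i) / n) ^ 2
            ≤ ∑ j ∈ range (n - 1), w j *
                (vtx d S j k - (∑ k' ∈ range n, vtx d S j k') / n) ^ 2 := by
        intro k hk
        have h1 : y k - (∑ i ∈ range n, y i) / n
            = ∑ j ∈ range (n - 1), w j *
                (vtx d S j k - (∑ k' ∈ range n, vtx d S j k') / n) := by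
          rw [hdecomp k hk, hmean, ← Finset.sum_sub_distrib]
          apply Finset.sum_congr rfl
          intro j _
          ring
        rw [h1]
        exact jensen_sq _ _ _ hwpos hw1
      calc tssF n y ≤ ∑ k ∈ range n, ∑ j ∈ range (n - 1), w j *
              (vtx d S j k - (∑ k' ∈ range n, vtx d S j k') / n) ^ 2 :=
            Finset.sum_le_sum hjensen
        _ = ∑ j ∈ range (n - 1), w j * tssF n (vtx d S j) := by
            rw [Finset.sum_comm]
            apply Finset.sum_congr rfl
            intro j _
            rw [tssF, ← Finset.mul_sum]
        _ ≤ ∑ j ∈ range (n - 1), w j * tssF n (vtx d S j0) :=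
            Finset.sum_le_sum fun j hj =>
              mul_le_mul_of_nonneg_left (hvle j hj) (hwpos j hj)
        _ = tssF n (vtx d S j0) := by rw [← Finset.sum_mul, hw1, one_mul]
end

section
/- Let n ≥ 2 be even, d > 0, D ≥ (n−1)d. Among all sequences 0 ≤ y₁ < ⋯ < y_n ≤ D with consecutive spacing at least d, the total sum of squares Σᵢ(yᵢ − ȳ)² is maximized by y_p = (p−1)d for p = 1,…,n/2 and y_p = D − (n−p)d for p = n/2+1,…,n; that is, splitting the antennas equally into two d-spaced clusters at the two ends of the segment. -/
open Finset

private lemma gauss (n : ℕ) : (∑ i ∈ range n, (i:ℝ)) = n*(n-1)/2 := by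
  induction n with
  | zero => simp
  | succ k ih => rw [Finset.sum_range_succ, ih]; push_cast; ring

private lemma sum_sq_sub_mean (n : ℕ) (hn : 0 < n) (f : ℕ → ℝ) :
    ∑ i ∈ range n, (f i - (∑ j ∈ range n, f j) / n) ^ 2
      = ∑ i ∈ range n, (f i)^2 - (∑ i ∈ range n, f i)^2 / n := by
  have hn0 : (n:ℝ) ≠ 0 := Nat.cast_ne_zero.2 hn.ne'
  set S := ∑ j ∈ range n, f j with hS
  have h : ∀ i ∈ range n, (f i - S / n)^2 = (f i)^2 - (2*S/n) * f i + S^2/n^2 := by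
    intro i _; field_simp; ring
  rw [Finset.sum_congr rfl h, Finset.sum_add_distrib, Finset.sum_sub_distrib,
    Finset.sum_const, ← Finset.mul_sum, Finset.card_range, ← hS, nsmul_eq_mul]
  field_simp
  ring

private lemma Q_decomp (n : ℕ) (hn : 0 < n) (g c : ℕ → ℝ) :
    (∑ i ∈ range n, (g i + c i)^2) - (∑ i ∈ range n, (g i + c i))^2 / n
    = ((∑ i ∈ range n, (g i)^2) - (∑ i ∈ range n, g i)^2 / n)
    + ((∑ i ∈ range n, (c i)^2) - (∑ i ∈ range n, c i)^2 / n)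
    + 2 * (∑ i ∈ range n, g i * (c i - (∑ j ∈ range n, c j) / n)) := by
  have hn0 : (n:ℝ) ≠ 0 := Nat.cast_ne_zero.2 hn.ne'
  have h1 : ∑ i ∈ range n, (g i + c i)^2
      = (∑ i ∈ range n, (g i)^2) + 2 * (∑ i ∈ range n, g i * c i) + ∑ i ∈ range n, (c i)^2 := by
    rw [Finset.mul_sum, ← Finset.sum_add_distrib, ← Finset.sum_add_distrib]
    exact Finset.sum_congr rfl fun i _ => by ring
  have h2 : ∑ i ∈ range n, g i * (c i - (∑ j ∈ range n, c j) / n)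
      = (∑ i ∈ range n, g i * c i) - (∑ i ∈ range n, g i) * ((∑ j ∈ range n, c j) / n) := by
    simp_rw [mul_sub]
    rw [Finset.sum_sub_distrib, ← Finset.sum_mul]
  rw [h1, h2, Finset.sum_add_distrib]
  field_simp
  ring

set_option maxHeartbeats 1000000 in
open Finset in
theorem tss_optimal_two_cluster_placement (n : ℕ) (hn : 2 ≤ n) (hneven : Even n)
    (d D : ℝ) (hd : 0 < d) (hD : (n - 1 : ℝ) * d ≤ D) :
    let ystar : ℕ → ℝ := fun i => if i < n / 2 then (i : ℝ) * d else D - ((n - 1 - i : ℕ) : ℝ) * d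
    let TSS : (ℕ → ℝ) → ℝ := fun y =>
      ∑ i ∈ Finset.range n, (y i - (∑ j ∈ Finset.range n, y j) / n) ^ 2
    ∀ y : ℕ → ℝ, 0 ≤ y 0 → y (n - 1) ≤ D →
      (∀ i, i + 1 < n → d ≤ y (i + 1) - y i) →
      TSS y ≤ TSS ystar := by
  intro ystar TSS y h0 hyD hsep
  have hT : ∀ f : ℕ → ℝ, TSS f = ∑ i ∈ range n, (f i - (∑ j ∈ range n, f j)/(n:ℝ))^2 :=
    fun f => rfl
  have hys : ∀ i, ystar i = if i < n/2 then (i:ℝ)*d else D - ((n-1-i : ℕ):ℝ)*d := fun i => rfl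
  rw [hT y, hT ystar]
  clear hT
  obtain ⟨Y, hY⟩ : ∃ Y : ℕ → ℝ, Y = ystar := ⟨_, rfl⟩
  rw [← hY]
  have hYs : ∀ i, Y i = if i < n/2 then (i:ℝ)*d else D - ((n-1-i : ℕ):ℝ)*d := by
    intro i; rw [hY, hys i]
  clear hY hys
  obtain ⟨m, hm⟩ : ∃ m, m = n / 2 := ⟨_, rfl⟩
  simp only [← hm] at hYs
  have hm2 : m * 2 = n := by
    have := Nat.div_mul_cancel hneven.two_dvd
    omega
  have hn0 : 0 < n := by omega
  have hm1 : 1 ≤ m := by omega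
  have hnR : (n:ℝ) ≠ 0 := Nat.cast_ne_zero.2 hn0.ne'
  have hn2m : (n:ℝ) = 2 * m := by
    have := congrArg (Nat.cast : ℕ → ℝ) hm2
    push_cast at this; linarith
  obtain ⟨L, hLdef⟩ : ∃ L : ℝ, L = D - ((n:ℝ)-1)*d := ⟨_, rfl⟩
  have hL0 : 0 ≤ L := by rw [hLdef]; linarith
  -- telescoped spacing
  have gap : ∀ k i, i + k < n → y i + k * d ≤ y (i + k) := by
    intro k
    induction k with
    | zero => intro i _; simp
    | succ k ih =>
      intro i h
      have h1 := ih i (by omega)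
      have h2 := hsep (i + k) (by omega)
      show y i + ((k:ℕ)+1 : ℕ) * d ≤ y ((i+k)+1)
      push_cast
      linarith
  have hlow : ∀ i, i < n → (i:ℝ)*d ≤ y i := by
    intro i hi
    have := gap i 0 (by omega)
    simp only [zero_add] at this
    linarith
  have hcastni : ∀ i, i < n → ((n-1-i:ℕ):ℝ) = (n:ℝ) - 1 - i := by
    intro i hi
    have h : (n - 1 - i) + (i + 1) = n := by omega
    have := congrArg (Nat.cast : ℕ → ℝ) h
    push_cast at this
    linarith
  have hhigh : ∀ i, i < n → y i ≤ L + i*d := by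
    intro i hi
    have h1 := gap (n-1-i) i (by omega)
    have hsum : i + (n-1-i) = n-1 := by omega
    rw [hsum, hcastni i hi] at h1
    rw [hLdef]
    linarith
  -- mean of the arithmetic sequence
  obtain ⟨μ, hμ⟩ : ∃ μ : ℝ, μ = ((n:ℝ)-1)/2 * d := ⟨_, rfl⟩
  have hCn : (∑ j ∈ range n, (j:ℝ)*d) / (n:ℝ) = μ := by
    rw [← Finset.sum_mul, gauss, hμ]
    field_simp
  -- two-cluster shift function
  obtain ⟨zs, hzs⟩ : ∃ zs : ℕ → ℝ, zs = fun i => if i < m then 0 else L := ⟨_, rfl⟩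
  have hYs' : ∀ i ∈ range n, Y i = zs i + (i:ℝ)*d := by
    intro i hi
    have hi' := Finset.mem_range.1 hi
    rw [hYs i, hzs]
    by_cases h : i < m
    · simp only [if_pos h, zero_add]
    · simp only [if_neg h]
      rw [hcastni i hi', hLdef]
      ring
  -- decompositions
  have hdec_y := Q_decomp n hn0 (fun i => y i - (i:ℝ)*d) (fun i => (i:ℝ)*d)
  simp only [sub_add_cancel] at hdec_y
  rw [hCn] at hdec_y
  have hdec_s := Q_decomp n hn0 zs (fun i => (i:ℝ)*d)
  simp only [] at hdec_s
  rw [hCn] at hdec_s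
  have e1 : ∑ i ∈ range n, (zs i + (i:ℝ)*d)^2 = ∑ i ∈ range n, (Y i)^2 :=
    Finset.sum_congr rfl fun i hi => by rw [hYs' i hi]
  have e2 : ∑ i ∈ range n, (zs i + (i:ℝ)*d) = ∑ i ∈ range n, Y i :=
    Finset.sum_congr rfl fun i hi => by rw [hYs' i hi]
  rw [e1, e2] at hdec_s
  -- sums for the two-cluster shift
  have hnmm : n = m + m := by omega
  have hzs_sum : ∑ i ∈ range n, zs i = m * L := by
    rw [hnmm, Finset.sum_range_add]
    have a1 : ∑ i ∈ range m, zs i = 0 :=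
      Finset.sum_eq_zero fun i hi => by rw [hzs]; simp [Finset.mem_range.1 hi]
    have a2 : ∑ i ∈ range m, zs (m + i) = m * L := by
      rw [Finset.sum_congr rfl fun i _ => show zs (m+i) = L by
        rw [hzs]; exact if_neg (by omega)]
      rw [Finset.sum_const, Finset.card_range, nsmul_eq_mul]
    rw [a1, a2, zero_add]
  have hzs_sq : ∑ i ∈ range n, (zs i)^2 = m * L^2 := by
    rw [hnmm, Finset.sum_range_add]
    have a1 : ∑ i ∈ range m, (zs i)^2 = 0 :=
      Finset.sum_eq_zero fun i hi => by rw [hzs]; simp [Finset.mem_range.1 hi]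
    have a2 : ∑ i ∈ range m, (zs (m + i))^2 = m * L^2 := by
      rw [Finset.sum_congr rfl fun i _ => show (zs (m+i))^2 = L^2 by
        rw [hzs]; simp only []; rw [if_neg (by omega)]]
      rw [Finset.sum_const, Finset.card_range, nsmul_eq_mul]
    rw [a1, a2, zero_add]
  have hm0 : (m:ℝ) ≠ 0 := Nat.cast_ne_zero.2 (by omega)
  have hQzs : (∑ i ∈ range n, (zs i)^2) - (∑ i ∈ range n, zs i)^2/(n:ℝ) = (n:ℝ)*L^2/4 := by
    rw [hzs_sq, hzs_sum, hn2m]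
    field_simp
    ring
  -- quadratic bound
  have hQg : (∑ i ∈ range n, (y i - (i:ℝ)*d)^2) - (∑ i ∈ range n, (y i - (i:ℝ)*d))^2/(n:ℝ)
      ≤ (n:ℝ)*L^2/4 := by
    obtain ⟨Z, hZ⟩ : ∃ Z : ℝ, Z = ∑ i ∈ range n, (y i - (i:ℝ)*d) := ⟨_, rfl⟩
    rw [← hZ]
    have h1 : ∑ i ∈ range n, (y i - (i:ℝ)*d)^2 ≤ L * Z := by
      rw [hZ, Finset.mul_sum]
      apply Finset.sum_le_sum
      intro i hi
      have hi' := Finset.mem_range.1 hi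
      have l1 := hlow i hi'
      have l2 := hhigh i hi'
      nlinarith
    have hnpos : (0:ℝ) < n := by positivity
    have h2 : 0 ≤ ((n:ℝ)*L - 2*Z)^2 / (4*n) := by positivity
    have h3 : (n:ℝ)*L^2/4 - (L*Z - Z^2/(n:ℝ)) = ((n:ℝ)*L - 2*Z)^2/(4*(n:ℝ)) := by
      field_simp
      ring
    linarith
  -- linear bound
  have hlin : ∑ i ∈ range n, (y i - (i:ℝ)*d) * ((i:ℝ)*d - μ)
      ≤ ∑ i ∈ range n, zs i * ((i:ℝ)*d - μ) := by
    apply Finset.sum_le_sum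
    intro i hi
    have hi' := Finset.mem_range.1 hi
    by_cases h : i < m
    · have hz0 : zs i = 0 := by rw [hzs]; simp [h]
      rw [hz0, zero_mul]
      have him : i + 1 ≤ m := h
      have himR : (i:ℝ) + 1 ≤ (m:ℝ) := by exact_mod_cast him
      have hcof : (i:ℝ)*d - μ ≤ 0 := by
        rw [hμ, hn2m]
        nlinarith
      have hl := hlow i hi'
      nlinarith
    · have hzL : zs i = L := by rw [hzs]; simp [h]
      rw [hzL]
      have him : m ≤ i := Nat.not_lt.1 h
      have himR : (m:ℝ) ≤ (i:ℝ) := by exact_mod_cast him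
      have hcof : 0 ≤ (i:ℝ)*d - μ := by
        rw [hμ, hn2m]
        nlinarith
      have hh := hhigh i hi'
      have hle : y i - (i:ℝ)*d ≤ L := by linarith
      exact mul_le_mul_of_nonneg_right hle hcof
  -- combine
  rw [sum_sq_sub_mean n hn0 y, sum_sq_sub_mean n hn0 Y, hdec_y, hdec_s]
  linarith
end
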